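/- On the full shift Y = {0,…,b}^ℕ, fix α > 1 and θ : {0,…,b} → ℝ. Define φ_{θ,α}(y) = Σ_{j≥0} θ(y_j)(α-1)^j / α^{j+1} and H_{θ,α}(y) = e^{(α-1)φ_{θ,α}(y)}. Then L_{φ_{θ,α}} H_{θ,α} = (Σ_{i=0}^{b} e^{θ(i)}) H_{θ,α}. -/

import Mathlib

open Real

noncomputable section

/-- Prepending a symbol: `σ^{-1}y = {cons i y : i ∈ A}` on the full shift. -/
def cons {A : Type*} (i : A) (y : ℕ → A) : ℕ → A := fun n =>
  match n with
  | 0 => i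
  | k + 1 => y k

/-- The potential `φ_{θ,α}(y) = ∑_{j ≥ 0} θ(y_j)(α-1)^j / α^{j+1}`. -/
noncomputable def phiThetaAlpha (b : ℕ) (θ : Fin (b + 1) → ℝ) (α : ℝ)
    (y : ℕ → Fin (b + 1)) : ℝ :=
  ∑' j : ℕ, θ (y j) * (α - 1) ^ j / α ^ (j + 1)

/-- The function `H_{θ,α}(y) = e^{(α-1)φ_{θ,α}(y)}`. -/
noncomputable def HThetaAlpha (b : ℕ) (θ : Fin (b + 1) → ℝ) (α : ℝ)
    (y : ℕ → Fin (b + 1)) : ℝ :=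
  Real.exp ((α - 1) * phiThetaAlpha b θ α y)

/-
The potential satisfies the affine shift relation `φ(iy) = θ(i)/α + (α-1)/α · φ(y)`. Hence
`φ(iy) + (α-1)φ(iy) = αφ(iy) = θ(i) + (α-1)φ(y)`, i.e. `e^{φ(iy)} H(iy) = e^{θ(i)} H(y)`,
and summing over the preimages `iy` of `y` gives the eigenvalue equation.
-/

lemma summable_mul_geometric_of_abs_le {f : ℕ → ℝ} {M r : ℝ} (hf : ∀ j, |f j| ≤ M)
    (hr : |r| < 1) : Summable fun j ↦ f j * r ^ j :=
  .of_norm_bounded ((summable_geometric_of_lt_one (abs_nonneg r) hr).mul_left M) fun j ↦ by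
    rw [norm_mul, norm_pow, Real.norm_eq_abs, Real.norm_eq_abs]
    exact mul_le_mul_of_nonneg_right (hf j) (by positivity)

lemma summable_phiThetaAlpha {b : ℕ} (θ : Fin (b + 1) → ℝ) {α : ℝ} (hα : 1 / 2 < α)
    (y : ℕ → Fin (b + 1)) :
    Summable fun j ↦ θ (y j) * (α - 1) ^ j / α ^ (j + 1) := by
  have hα₀ : 0 < α := by linarith
  obtain ⟨M, hM⟩ := Finite.exists_le fun i ↦ |θ i / α|
  have hr : |(α - 1) / α| < 1 := by
    rw [abs_div, abs_of_pos hα₀, div_lt_one hα₀]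
    exact abs_lt.2 ⟨by linarith, by linarith⟩
  convert summable_mul_geometric_of_abs_le (fun j ↦ hM (y j)) hr using 2 with j
  rw [div_pow, pow_succ]
  field_simp

lemma phiThetaAlpha_cons {b : ℕ} (θ : Fin (b + 1) → ℝ) {α : ℝ} (hα : 1 / 2 < α)
    (i : Fin (b + 1)) (y : ℕ → Fin (b + 1)) :
    phiThetaAlpha b θ α (cons i y) = θ i / α + (α - 1) / α * phiThetaAlpha b θ α y := by
  have hα₀ : α ≠ 0 := by positivity
  rw [phiThetaAlpha, (summable_phiThetaAlpha θ hα (cons i y)).tsum_eq_zero_add, phiThetaAlpha,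
    ← tsum_mul_left]
  congr 1
  · simp [cons]
  · refine tsum_congr fun j ↦ ?_
    simp only [cons]
    field_simp
    ring

lemma exp_phiThetaAlpha_mul_HThetaAlpha_cons {b : ℕ} (θ : Fin (b + 1) → ℝ) {α : ℝ}
    (hα : 1 / 2 < α) (i : Fin (b + 1)) (y : ℕ → Fin (b + 1)) :
    exp (phiThetaAlpha b θ α (cons i y)) * HThetaAlpha b θ α (cons i y) =
      exp (θ i) * HThetaAlpha b θ α y := by
  have hα₀ : α ≠ 0 := by positivity
  rw [HThetaAlpha, HThetaAlpha, ← exp_add, ← exp_add, phiThetaAlpha_cons θ hα]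
  congr 1
  field_simp
  ring

/-- `L_{φ_{θ,α}} H_{θ,α} = (∑_{i=0}^b e^{θ(i)}) H_{θ,α}`, where
`L_φ f(y) = ∑_{z ∈ σ^{-1}y} e^{φ(z)} f(z)`. -/
theorem stmt3 (b : ℕ) (θ : Fin (b + 1) → ℝ) (α : ℝ) (hα : 1 < α) :
    ∀ y : ℕ → Fin (b + 1),
      (∑ i : Fin (b + 1),
          Real.exp (phiThetaAlpha b θ α (cons i y)) * HThetaAlpha b θ α (cons i y)) =
        (∑ i : Fin (b + 1), Real.exp (θ i)) * HThetaAlpha b θ α y := by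
  intro y
  rw [Finset.sum_mul]
  exact Finset.sum_congr rfl fun i _ ↦
    exp_phiThetaAlpha_mul_HThetaAlpha_cons θ (by linarith) i y
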